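/- Optimal dual variable for the AUC margin loss: the function α ↦ E_μ[F_M(a(S), b(S), α)] on [0,∞) attains its supremum at the unique maximizer α* = max(m + b(S) − a(S), 0); in particular α* = m + b(S) − a(S) when m + b(S) − a(S) ≥ 0 and α* = 0 otherwise. -/

import Mathlib

/-!
Split `F_M` along `A`: since `∫_A S = p·a(S)` and `∫_{Aᶜ} S = (1-p)·b(S)`, the expectation
`E_μ[F_M(a(S), b(S), α)]` is a constant plus `p(1-p)(2αd - α²)` with `d = m + b(S) - a(S)`,
a strictly concave parabola with vertex `d`; on `[0,∞)` it is maximized exactly at `max d 0`.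
-/

open MeasureTheory ProbabilityTheory

/-- The AUC-margin integrand
`F_M(a,b,α) = (1−p)(S−a)²·1_A + p(S−b)²·1_{Aᶜ} − p(1−p)α² + 2α(p(1−p)m + p·S·1_{Aᶜ} − (1−p)·S·1_A)`. -/
noncomputable def FM {Ω : Type*} (A : Set Ω) (p m : ℝ) (S : Ω → ℝ)
    (a b α : ℝ) (ω : Ω) : ℝ :=
  (1 - p) * (S ω - a) ^ 2 * A.indicator 1 ω
    + p * (S ω - b) ^ 2 * Aᶜ.indicator 1 ω
    - p * (1 - p) * α ^ 2
    + 2 * α * (p * (1 - p) * m + p * S ω * Aᶜ.indicator 1 ω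
        - (1 - p) * S ω * A.indicator 1 ω)

lemma two_mul_mul_sub_sq_add_sq_sub_max_le {α : ℝ} (hα : 0 ≤ α) (d : ℝ) :
    2 * α * d - α ^ 2 + (α - max d 0) ^ 2 ≤ 2 * max d 0 * d - max d 0 ^ 2 := by
  rcases le_total 0 d with hd | hd
  · rw [max_eq_left hd]; nlinarith
  · rw [max_eq_right hd]; nlinarith

namespace ProbabilityTheory

variable {Ω : Type*} [MeasurableSpace Ω] {μ : Measure Ω}

lemma setIntegral_eq_measureReal_mul_integral_cond [IsFiniteMeasure μ] (s : Set Ω)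
    (f : Ω → ℝ) : ∫ ω in s, f ω ∂μ = μ.real s * ∫ ω, f ω ∂μ[|s] := by
  rw [cond, integral_smul_measure, smul_eq_mul, ENNReal.toReal_inv, ← measureReal_def]
  rcases eq_or_ne (μ.real s) 0 with hs | hs
  · rw [hs, zero_mul, setIntegral_measure_zero]
    exact (measureReal_eq_zero_iff (measure_ne_top μ s)).1 hs
  · rw [mul_inv_cancel_left₀ hs]

end ProbabilityTheory

lemma FM_eq_indicator_add {Ω : Type*} (A : Set Ω) (p m : ℝ) (S : Ω → ℝ) (a b α : ℝ) :
    FM A p m S a b α = A.indicator (fun ω => (1 - p) * ((S ω - a) ^ 2 - 2 * α * S ω))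
      + Aᶜ.indicator (fun ω => p * ((S ω - b) ^ 2 + 2 * α * S ω))
      + fun _ => p * (1 - p) * (2 * α * m - α ^ 2) := by
  funext ω
  by_cases hω : ω ∈ A <;>
    simp only [FM, hω, Pi.add_apply, Pi.one_apply, Set.mem_compl_iff, Set.indicator_of_mem,
      Set.indicator_of_notMem, not_true_eq_false, not_false_eq_true, mul_one, mul_zero, add_zero,
      zero_add, sub_zero] <;>
    ring

section

variable {Ω : Type*} [MeasurableSpace Ω] {μ : Measure Ω} [IsProbabilityMeasure μ]
  {A : Set Ω} {S : Ω → ℝ}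

lemma integral_FM (hA : MeasurableSet A) (hS : MemLp S 2 μ) {p a b : ℝ} (m α : ℝ)
    (hp : p = μ.real A) (ha : a = ∫ ω, S ω ∂μ[|A]) (hb : b = ∫ ω, S ω ∂μ[|Aᶜ]) :
    ∫ ω, FM A p m S a b α ω ∂μ = (1 - p) * ∫ ω in A, (S ω - a) ^ 2 ∂μ
      + p * ∫ ω in Aᶜ, (S ω - b) ^ 2 ∂μ + p * (1 - p) * (2 * α * (m + b - a) - α ^ 2) := by
  have hS1 : Integrable S μ := hS.integrable one_le_two
  have hSa : Integrable (fun ω => (S ω - a) ^ 2) μ := (hS.sub (memLp_const a)).integrable_sq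
  have hSb : Integrable (fun ω => (S ω - b) ^ 2) μ := (hS.sub (memLp_const b)).integrable_sq
  have hmeanA : ∫ ω in A, S ω ∂μ = p * a := by
    rw [setIntegral_eq_measureReal_mul_integral_cond, hp, ha]
  have hmeanAc : ∫ ω in Aᶜ, S ω ∂μ = (1 - p) * b := by
    rw [setIntegral_eq_measureReal_mul_integral_cond, probReal_compl_eq_one_sub hA, hp, hb]
  have hgA : Integrable (fun ω => (1 - p) * ((S ω - a) ^ 2 - 2 * α * S ω)) μ :=
    (hSa.sub (hS1.const_mul _)).const_mul _
  have hgAc : Integrable (fun ω => p * ((S ω - b) ^ 2 + 2 * α * S ω)) μ :=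
    (hSb.add (hS1.const_mul _)).const_mul _
  rw [FM_eq_indicator_add]
  simp only [Pi.add_apply]
  rw [integral_add ?_ (integrable_const _),
    integral_add (hgA.indicator hA) (hgAc.indicator hA.compl), integral_indicator hA,
    integral_indicator hA.compl, integral_const_mul, integral_const_mul,
    integral_sub hSa.integrableOn (hS1.const_mul _).integrableOn,
    integral_add hSb.integrableOn (hS1.const_mul _).integrableOn, integral_const_mul,
    integral_const_mul, hmeanA, hmeanAc, integral_const, probReal_univ, one_smul]
  · ring
  · exact (hgA.indicator hA).add (hgAc.indicator hA.compl)

end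

/-- Optimal dual variable for the AUC margin loss: `α ↦ E_μ[F_M(a(S), b(S), α)]` on `[0,∞)`
attains its supremum at the unique maximizer `α* = max(m + b(S) − a(S), 0)`; in particular
`α* = m + b(S) − a(S)` when `m + b(S) − a(S) ≥ 0` and `α* = 0` otherwise. -/
theorem optimal_dual_AUC_margin
    {Ω : Type*} [MeasurableSpace Ω] (μ : Measure Ω) [IsProbabilityMeasure μ]
    (A : Set Ω) (hA : MeasurableSet A)
    (p : ℝ) (hp : p = (μ A).toReal) (hp0 : 0 < p) (hp1 : p < 1)
    (S : Ω → ℝ) (hS : MemLp S 2 μ) (m : ℝ)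
    (aS bS αstar : ℝ)
    (haS : aS = ∫ ω, S ω ∂μ[|A]) (hbS : bS = ∫ ω, S ω ∂μ[|Aᶜ])
    (hαstar : αstar = max (m + bS - aS) 0) :
    IsGreatest ((fun α : ℝ => ∫ ω, FM A p m S aS bS α ω ∂μ) '' Set.Ici 0)
        (∫ ω, FM A p m S aS bS αstar ω ∂μ) ∧
    (∀ α ∈ Set.Ici (0 : ℝ),
        (∫ ω, FM A p m S aS bS α ω ∂μ) = (∫ ω, FM A p m S aS bS αstar ω ∂μ) → α = αstar) ∧
    (0 ≤ m + bS - aS → αstar = m + bS - aS) ∧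
    (m + bS - aS < 0 → αstar = 0) := by
  have hq : 0 < p * (1 - p) := mul_pos hp0 (sub_pos.2 hp1)
  have hαstar0 : 0 ≤ αstar := hαstar ▸ le_max_right _ _
  have hbound (α : ℝ) (hα : 0 ≤ α) :=
    hαstar ▸ two_mul_mul_sub_sq_add_sq_sub_max_le hα (m + bS - aS)
  simp only [integral_FM hA hS m _ hp haS hbS]
  refine ⟨⟨⟨αstar, hαstar0, rfl⟩, ?_⟩, fun α hα heq => ?_, fun h => hαstar ▸ max_eq_left h,
    fun h => hαstar ▸ max_eq_right h.le⟩
  · rintro _ ⟨α, hα, rfl⟩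
    nlinarith [hbound α hα, sq_nonneg (α - αstar)]
  · have hsq : (α - αstar) ^ 2 ≤ 0 := by
      have := hbound α hα
      have := mul_left_cancel₀ hq.ne' (add_left_cancel heq)
      linarith
    exact sub_eq_zero.1 (pow_eq_zero_iff two_ne_zero |>.1 (le_antisymm hsq (sq_nonneg _)))
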